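/- arXiv:2108.01500 — 2 statements merged into one kernel-verified Lean document; each statement's English description precedes it below -/
import Mathlib

section
/- Let α ≥ 5. Then for all x ∈ (0, 1/2]: 1 + (1+x)^α − (1−x)^{(1−α)/2} − (1+x)^{(1+α)/2} ≥ ((α−1)²/4) x². -/
/-!
Write `α = 2m + 1` with `m ≥ 2`. Then `g(x) = 1 + (1+x)^(2m+1) - (1-x)^(-m) - (1+x)^(m+1)`, and
`g(x) - m²x²` vanishes to third order at `0`, so only estimates sharp to first order can work.
Two such facts turn the real powers into polynomials. Bernoulli's inequality for the half
exponent, `(1+t)^r ≥ (1 + r t / 2)²`, needs `r / 2 ≥ 1`; this is where `α ≥ 5` enters. The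
factorisation `(1+y)²(1-y) = 1 + y(1-y-y²)` writes `(1-y)^(-r)` as `(1+y)^(2r)` divided by
`(1 + y(1-y-y²))^r`, to which Bernoulli applies again. On `[0, 2/5]` these bounds show that
`g(x) - m²x²` is nondecreasing; on `[2/5, 1/2]` they bound it directly (near `1/2` the
derivative is negative for `m = 2`). Either way what remains is a polynomial inequality on a
box. After the substitutions `m = 2 + a²`, `y = (hi b² + lo c²) / (b² + c²)` and `Q = Q₀ + q²`
for each quantity `Q` bounded below by `Q₀`, the numerator has only nonnegative coefficients.
-/

open Real Set

lemma exists_eq_add_sq_of_le {a b : ℝ} (h : a ≤ b) : ∃ p, b = a + p ^ 2 :=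
  ⟨√(b - a), by rw [sq_sqrt (sub_nonneg.2 h)]; ring⟩

lemma exists_eq_div_sq_add_sq_of_mem_Icc {lo hi y : ℝ} (hlt : lo < hi) (hy : y ∈ Icc lo hi) :
    ∃ b c : ℝ, 0 < b ^ 2 + c ^ 2 ∧ y = (hi * b ^ 2 + lo * c ^ 2) / (b ^ 2 + c ^ 2) := by
  refine ⟨√(y - lo), √(hi - y), ?_, ?_⟩ <;>
    rw [sq_sqrt (by linarith [hy.1]), sq_sqrt (by linarith [hy.2])]
  · linarith
  · rw [eq_div_iff (by linarith)]
    ring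

lemma sq_one_add_half_mul_le_rpow {r t : ℝ} (hr : 2 ≤ r) (ht : 0 ≤ t) :
    (1 + r / 2 * t) ^ 2 ≤ (1 + t) ^ r := by
  calc (1 + r / 2 * t) ^ 2 ≤ ((1 + t) ^ (r / 2)) ^ 2 := by
        gcongr
        exact one_add_mul_self_le_rpow_one_add (by linarith) (by linarith)
    _ = (1 + t) ^ r := by
        rw [← rpow_mul_natCast (by linarith)]
        norm_num

lemma rpow_two_mul {x : ℝ} (hx : 0 ≤ x) (r : ℝ) : x ^ (2 * r) = (x ^ r) ^ 2 := by
  rw [mul_comm, ← rpow_mul_natCast hx]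
  norm_num

lemma one_sub_rpow_neg_mul_rpow (r : ℝ) {y : ℝ} (h₁ : -1 ≤ y) (h₂ : y < 1) :
    (1 - y) ^ (-r) * (1 + y * (1 - y - y ^ 2)) ^ r = ((1 + y) ^ r) ^ 2 := by
  have hpos : 0 < (1 - y) ^ r := rpow_pos_of_pos (by linarith) r
  rw [show 1 + y * (1 - y - y ^ 2) = (1 + y) ^ 2 * (1 - y) by ring,
    mul_rpow (by positivity) (by linarith), rpow_neg (by linarith),
    ← rpow_pow_comm (by linarith)]
  field_simp

/-- The function `g` of the paper, written with `α = 2 m + 1`. -/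
noncomputable def weight (m x : ℝ) : ℝ :=
  1 + (1 + x) ^ (2 * m + 1) - (1 - x) ^ (-m) - (1 + x) ^ (m + 1)

lemma hasDerivAt_weight (m : ℝ) {y : ℝ} (h₁ : -1 < y) (h₂ : y < 1) :
    HasDerivAt (weight m)
      ((2 * m + 1) * (1 + y) ^ (2 * m) - m * (1 - y) ^ (-m - 1) - (m + 1) * (1 + y) ^ m) y := by
  have hp : HasDerivAt (fun z : ℝ => 1 + z) 1 y := (hasDerivAt_id y).const_add 1
  have hm : HasDerivAt (fun z : ℝ => 1 - z) (-1) y := (hasDerivAt_id y).const_sub 1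
  have hsum := (((hp.rpow_const (p := 2 * m + 1) (.inl (by linarith))).const_add 1).sub
    (hm.rpow_const (p := -m) (.inl (by linarith)))).sub
    (hp.rpow_const (p := m + 1) (.inl (by linarith)))
  refine HasDerivAt.congr_deriv (f := weight m) hsum ?_
  rw [show 2 * m + 1 - 1 = 2 * m by ring, show m + 1 - 1 = m by ring]
  ring

set_option maxRecDepth 4000 in
lemma weight_deriv_poly_nonneg {m y P V : ℝ} (hm : 2 ≤ m) (hy : y ∈ Icc 0 (2 / 5))
    (hP : (1 + m / 2 * y) ^ 2 ≤ P) (hV : (1 + (m + 1) / 2 * (y * (1 - y - y ^ 2))) ^ 2 ≤ V) :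
    0 ≤ (2 * m + 1) * P ^ 2 * V - m * (1 + y) ^ 2 * P ^ 2 - (m + 1) * P * V
      - 2 * m ^ 2 * y * V := by
  obtain ⟨p, rfl⟩ := exists_eq_add_sq_of_le hP
  obtain ⟨v, rfl⟩ := exists_eq_add_sq_of_le hV
  obtain ⟨a, rfl⟩ := exists_eq_add_sq_of_le hm
  obtain ⟨b, c, hbc, rfl⟩ := exists_eq_div_sq_add_sq_of_mem_Icc (by norm_num) hy
  field_simp
  ring_nf
  positivity

set_option maxRecDepth 4000 in
lemma weight_sub_poly_nonneg {m x P W : ℝ} (hm : 2 ≤ m) (hx : x ∈ Icc (2 / 5) (1 / 2))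
    (hP : (1 + m / 2 * x) ^ 2 ≤ P) (hW : (1 + m / 2 * (x * (1 - x - x ^ 2))) ^ 2 ≤ W) :
    0 ≤ W * (1 + (1 + x) * P ^ 2 - (1 + x) * P - m ^ 2 * x ^ 2) - P ^ 2 := by
  obtain ⟨p, rfl⟩ := exists_eq_add_sq_of_le hP
  obtain ⟨w, rfl⟩ := exists_eq_add_sq_of_le hW
  obtain ⟨a, rfl⟩ := exists_eq_add_sq_of_le hm
  obtain ⟨b, c, hbc, rfl⟩ := exists_eq_div_sq_add_sq_of_mem_Icc (by norm_num) hx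
  field_simp
  ring_nf
  positivity

lemma weight_deriv_sub_nonneg {m y : ℝ} (hm : 2 ≤ m) (hy : y ∈ Icc 0 (2 / 5)) :
    0 ≤ (2 * m + 1) * (1 + y) ^ (2 * m) - m * (1 - y) ^ (-m - 1) - (m + 1) * (1 + y) ^ m
      - 2 * m ^ 2 * y := by
  obtain ⟨hy0, hy1⟩ := hy
  have hc : 0 ≤ y * (1 - y - y ^ 2) := by nlinarith
  have hpoly := weight_deriv_poly_nonneg hm ⟨hy0, hy1⟩ (sq_one_add_half_mul_le_rpow hm hy0)
    (sq_one_add_half_mul_le_rpow (by linarith) hc)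
  set P := (1 + y) ^ m
  set V := (1 + y * (1 - y - y ^ 2)) ^ (m + 1)
  have hfac : (1 - y) ^ (-m - 1) * V = P ^ 2 * (1 + y) ^ 2 := by
    rw [show -m - 1 = -(m + 1) by ring, one_sub_rpow_neg_mul_rpow _ (by linarith) (by linarith),
      rpow_add_one (by linarith)]
    ring
  rw [rpow_two_mul (by linarith)]
  refine nonneg_of_mul_nonneg_left ?_ (by positivity : 0 < V)
  linear_combination hpoly + m * hfac

lemma sq_mul_sq_le_weight_of_le_two_fifths {m x : ℝ} (hm : 2 ≤ m) (hx : x ∈ Icc 0 (2 / 5)) :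
    m ^ 2 * x ^ 2 ≤ weight m x := by
  set f := fun y ↦ weight m y - m ^ 2 * y ^ 2
  have hf : ∀ y ∈ Icc (0 : ℝ) (2 / 5), HasDerivAt f ((2 * m + 1) * (1 + y) ^ (2 * m)
      - m * (1 - y) ^ (-m - 1) - (m + 1) * (1 + y) ^ m - 2 * m ^ 2 * y) y := fun y hy ↦
    ((hasDerivAt_weight m (by linarith [hy.1]) (by linarith [hy.2])).sub
      ((hasDerivAt_pow 2 y).const_mul (m ^ 2))).congr_deriv (by simp; ring)
  have hmono : MonotoneOn f (Icc 0 (2 / 5)) :=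
    monotoneOn_of_hasDerivWithinAt_nonneg (convex_Icc _ _)
      (fun y hy ↦ (hf y hy).continuousAt.continuousWithinAt)
      (fun y hy ↦ (hf y (interior_subset hy)).hasDerivWithinAt)
      (fun y hy ↦ weight_deriv_sub_nonneg hm (interior_subset hy))
  simpa [f, weight] using hmono ⟨le_rfl, by norm_num⟩ hx hx.1

lemma sq_mul_sq_le_weight_of_two_fifths_le {m x : ℝ} (hm : 2 ≤ m)
    (hx : x ∈ Icc (2 / 5) (1 / 2)) :
    m ^ 2 * x ^ 2 ≤ weight m x := by
  obtain ⟨hx0, hx1⟩ := hx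
  have hc : 0 ≤ x * (1 - x - x ^ 2) := by nlinarith
  have hpoly := weight_sub_poly_nonneg hm ⟨hx0, hx1⟩
    (sq_one_add_half_mul_le_rpow hm (by linarith)) (sq_one_add_half_mul_le_rpow hm hc)
  set P := (1 + x) ^ m
  set W := (1 + x * (1 - x - x ^ 2)) ^ m
  have hfac : (1 - x) ^ (-m) * W = P ^ 2 :=
    one_sub_rpow_neg_mul_rpow m (by linarith) (by linarith)
  have hweight : weight m x = 1 + (1 + x) * P ^ 2 - (1 - x) ^ (-m) - (1 + x) * P := by
    rw [weight, rpow_add_one (by linarith), rpow_add_one (by linarith), rpow_two_mul (by linarith)]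
    ring
  rw [← sub_nonneg, hweight]
  refine nonneg_of_mul_nonneg_left ?_ (by positivity : 0 < W)
  linear_combination hpoly + hfac

/-- Lemma 4.5: `g(x) ≥ ((α−1)²/4) x²` for `α ≥ 5` and `x ∈ (0, 1/2]`. -/
theorem g_lower_bound_large_alpha (α : ℝ) (hα : 5 ≤ α)
    (x : ℝ) (hx : x ∈ Set.Ioc (0 : ℝ) (1 / 2)) :
    1 + (1 + x) ^ α - (1 - x) ^ ((1 - α) / 2) - (1 + x) ^ ((1 + α) / 2) ≥
      (α - 1) ^ 2 / 4 * x ^ 2 := by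
  obtain ⟨hx0, hx1⟩ := hx
  have hm : 2 ≤ (α - 1) / 2 := by linarith
  have key : ((α - 1) / 2) ^ 2 * x ^ 2 ≤ weight ((α - 1) / 2) x := by
    rcases le_total x (2 / 5) with h | h
    · exact sq_mul_sq_le_weight_of_le_two_fifths hm ⟨hx0.le, h⟩
    · exact sq_mul_sq_le_weight_of_two_fifths_le hm ⟨h, hx1⟩
  rw [weight, show 2 * ((α - 1) / 2) + 1 = α by ring, show -((α - 1) / 2) = (1 - α) / 2 by ring,
    show (α - 1) / 2 + 1 = (1 + α) / 2 by ring] at key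
  linarith
end

section
/- Let α < 0. Then there exists ε > 0 (depending on α) such that for all x ∈ (0, ε): 1 + (1+x)^α − (1−x)^{(1−α)/2} − (1+x)^{(1+α)/2} < ((α−1)²/4) x². -/
/-!
Put `h(x) = g(x) - (α - 1)² / 4 · x²`. Since `(1 + α) / 2 = α + (1 - α) / 2` and `g''(0) = (α - 1)² / 2`,
`h(0) = h'(0) = h''(0) = 0`, while `h'''(0) = 3/4 · α (α - 1) (α - 3) < 0` for `α < 0`. By continuity
`h''' < 0` just to the right of `0`, and the mean value theorem carries the sign down to `h''`, `h'`
and `h`.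
-/

open Filter Topology Set

lemma eventually_neg_nhdsGT_of_hasDerivAt {f f' : ℝ → ℝ} {a : ℝ}
    (hf : ∀ᶠ x in 𝓝 a, HasDerivAt f (f' x) x) (ha : f a = 0)
    (hf' : ∀ᶠ x in 𝓝[>] a, f' x < 0) : ∀ᶠ x in 𝓝[>] a, f x < 0 := by
  obtain ⟨l, u, ⟨hla, hau⟩, hderiv⟩ := mem_nhds_iff_exists_Ioo_subset.1 hf
  obtain ⟨v, hav, hneg⟩ := mem_nhdsGT_iff_exists_Ioo_subset.1 hf'
  filter_upwards [Ioo_mem_nhdsGT (lt_min hau hav)] with x ⟨hax, hxuv⟩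
  have hxu : x < u := hxuv.trans_le (min_le_left _ _)
  have hxv : x < v := hxuv.trans_le (min_le_right _ _)
  obtain ⟨c, hc, hslope⟩ := exists_hasDerivAt_eq_slope f f' hax
    (fun y hy => (hderiv ⟨hla.trans_le hy.1, hy.2.trans_lt hxu⟩).continuousAt.continuousWithinAt)
    (fun y hy => hderiv ⟨hla.trans hy.1, hy.2.trans hxu⟩)
  have hfx : f x = f' c * (x - a) := by
    rw [hslope, ha, sub_zero, div_mul_cancel₀ _ (sub_ne_zero.2 hax.ne')]
  rw [hfx]
  exact mul_neg_of_neg_of_pos (hneg ⟨hc.1, hc.2.trans hxv⟩) (sub_pos.2 hax)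

lemma hasDerivAt_one_add_rpow (p : ℝ) {x : ℝ} (hx : 0 < 1 + x) :
    HasDerivAt (fun y : ℝ => (1 + y) ^ p) (p * (1 + x) ^ (p - 1)) x := by
  simpa using ((hasDerivAt_id x).const_add 1).rpow_const (p := p) (Or.inl hx.ne')

lemma hasDerivAt_one_sub_rpow (p : ℝ) {x : ℝ} (hx : 0 < 1 - x) :
    HasDerivAt (fun y : ℝ => (1 - y) ^ p) (-(p * (1 - x) ^ (p - 1))) x := by
  simpa using ((hasDerivAt_id x).const_sub 1).rpow_const (p := p) (Or.inl hx.ne')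

noncomputable section PowWeight

variable (a b c : ℝ)

def powWeight (x : ℝ) : ℝ := 1 + (1 + x) ^ a - (1 - x) ^ b - (1 + x) ^ c

def powWeightDeriv (x : ℝ) : ℝ :=
  a * (1 + x) ^ (a - 1) + b * (1 - x) ^ (b - 1) - c * (1 + x) ^ (c - 1)

def powWeightDeriv2 (x : ℝ) : ℝ :=
  a * (a - 1) * (1 + x) ^ (a - 2) - b * (b - 1) * (1 - x) ^ (b - 2)
    - c * (c - 1) * (1 + x) ^ (c - 2)

def powWeightDeriv3 (x : ℝ) : ℝ :=
  a * (a - 1) * (a - 2) * (1 + x) ^ (a - 3) + b * (b - 1) * (b - 2) * (1 - x) ^ (b - 3)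
    - c * (c - 1) * (c - 2) * (1 + x) ^ (c - 3)

variable {a b c} {x : ℝ}

lemma hasDerivAt_powWeight (hx : x ∈ Ioo (-1 : ℝ) 1) :
    HasDerivAt (powWeight a b c) (powWeightDeriv a b c x) x := by
  have hx₁ : 0 < 1 + x := by linarith [hx.1]
  have hx₂ : 0 < 1 - x := by linarith [hx.2]
  refine ((((hasDerivAt_one_add_rpow a hx₁).const_add 1).fun_sub
    (hasDerivAt_one_sub_rpow b hx₂)).fun_sub (hasDerivAt_one_add_rpow c hx₁)).congr_deriv ?_
  rw [powWeightDeriv]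
  ring

lemma hasDerivAt_powWeightDeriv (hx : x ∈ Ioo (-1 : ℝ) 1) :
    HasDerivAt (powWeightDeriv a b c) (powWeightDeriv2 a b c x) x := by
  have hx₁ : 0 < 1 + x := by linarith [hx.1]
  have hx₂ : 0 < 1 - x := by linarith [hx.2]
  refine ((((hasDerivAt_one_add_rpow (a - 1) hx₁).const_mul a).fun_add
    ((hasDerivAt_one_sub_rpow (b - 1) hx₂).const_mul b)).fun_sub
    ((hasDerivAt_one_add_rpow (c - 1) hx₁).const_mul c)).congr_deriv ?_
  simp only [powWeightDeriv2, sub_sub, one_add_one_eq_two]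
  ring

lemma hasDerivAt_powWeightDeriv2 (hx : x ∈ Ioo (-1 : ℝ) 1) :
    HasDerivAt (powWeightDeriv2 a b c) (powWeightDeriv3 a b c x) x := by
  have hx₁ : 0 < 1 + x := by linarith [hx.1]
  have hx₂ : 0 < 1 - x := by linarith [hx.2]
  refine ((((hasDerivAt_one_add_rpow (a - 2) hx₁).const_mul (a * (a - 1))).fun_sub
    ((hasDerivAt_one_sub_rpow (b - 2) hx₂).const_mul (b * (b - 1)))).fun_sub
    ((hasDerivAt_one_add_rpow (c - 2) hx₁).const_mul (c * (c - 1)))).congr_deriv ?_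
  simp only [powWeightDeriv3, sub_sub, show (2 : ℝ) + 1 = 3 by norm_num]
  ring

lemma continuousAt_powWeightDeriv3_zero : ContinuousAt (powWeightDeriv3 a b c) 0 := by
  unfold powWeightDeriv3
  fun_prop (disch := norm_num)

theorem eventually_powWeight_lt_nhdsGT {q : ℝ} (h₁ : a + b = c)
    (h₂ : a * (a - 1) - b * (b - 1) - c * (c - 1) = 2 * q)
    (h₃ : a * (a - 1) * (a - 2) + b * (b - 1) * (b - 2) < c * (c - 1) * (c - 2)) :
    ∀ᶠ x in 𝓝[>] 0, powWeight a b c x < q * x ^ 2 := by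
  have hnhds : Ioo (-1 : ℝ) 1 ∈ 𝓝 0 := Ioo_mem_nhds (by norm_num) (by norm_num)
  have hd₀ : ∀ᶠ x in 𝓝 (0 : ℝ), HasDerivAt (fun y => powWeight a b c y - q * y ^ 2)
      (powWeightDeriv a b c x - 2 * q * x) x := by
    filter_upwards [hnhds] with x hx
    refine ((hasDerivAt_powWeight hx).fun_sub ((hasDerivAt_pow 2 x).const_mul q)).congr_deriv ?_
    push_cast
    ring
  have hd₁ : ∀ᶠ x in 𝓝 (0 : ℝ), HasDerivAt (fun y => powWeightDeriv a b c y - 2 * q * y)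
      (powWeightDeriv2 a b c x - 2 * q) x := by
    filter_upwards [hnhds] with x hx
    simpa using (hasDerivAt_powWeightDeriv hx).fun_sub ((hasDerivAt_id x).const_mul (2 * q))
  have hd₂ : ∀ᶠ x in 𝓝 (0 : ℝ), HasDerivAt (fun y => powWeightDeriv2 a b c y - 2 * q)
      (powWeightDeriv3 a b c x) x := by
    filter_upwards [hnhds] with x hx
    exact (hasDerivAt_powWeightDeriv2 hx).sub_const _
  have hneg₃ : ∀ᶠ x in 𝓝[>] (0 : ℝ), powWeightDeriv3 a b c x < 0 := by
    refine nhdsWithin_le_nhds (continuousAt_powWeightDeriv3_zero.eventually_lt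
      continuousAt_const ?_)
    simp only [powWeightDeriv3, add_zero, sub_zero, Real.one_rpow, mul_one]
    linarith
  have hneg := eventually_neg_nhdsGT_of_hasDerivAt hd₀ (by simp [powWeight]) <|
    eventually_neg_nhdsGT_of_hasDerivAt hd₁ (by simp [powWeightDeriv]; linarith) <|
    eventually_neg_nhdsGT_of_hasDerivAt hd₂ (by simp [powWeightDeriv2]; linarith) hneg₃
  filter_upwards [hneg] with x hx
  linarith

end PowWeight

/-- Lemma 5.1: failure of the super-solution lower bound for `α < 0`. -/
theorem g_lower_bound_fails_neg_alpha (α : ℝ) (hα : α < 0) :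
    ∃ ε > (0 : ℝ), ∀ x ∈ Set.Ioo (0 : ℝ) ε,
      1 + (1 + x) ^ α - (1 - x) ^ ((1 - α) / 2) - (1 + x) ^ ((1 + α) / 2) <
        (α - 1) ^ 2 / 4 * x ^ 2 := by
  have hbound := eventually_powWeight_lt_nhdsGT (a := α) (b := (1 - α) / 2) (c := (1 + α) / 2)
    (q := (α - 1) ^ 2 / 4) (by ring) (by ring) (by
      linarith [mul_pos (mul_pos_of_neg_of_neg hα (by linarith : α - 1 < 0))
        (by linarith : 0 < 3 - α)])
  exact mem_nhdsGT_iff_exists_Ioo_subset.1 hbound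
end
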